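/- Let m, n be positive integers and P₂(ζ) = Σ_{j=1}^n ζⱼ² ∈ ℂ[ζ₁,…,ζₙ]. Then the polynomial ∂ₙ^m(P₂^m) − m!·(2ζₙ)^m is divisible by P₂ in ℂ[ζ₁,…,ζₙ]; that is, there exists a polynomial P̃ ∈ ℂ[ζ₁,…,ζₙ] such that ∂ₙ^m(P₂^m)(ζ) = m!·(2ζₙ)^m + P₂(ζ)·P̃(ζ) for all ζ. -/
import Mathlib


noncomputable section

/-- The polynomial `P₂(ζ) = Σⱼ ζⱼ²`. -/
def P₂ (n : ℕ) : MvPolynomial (Fin n) ℂ := ∑ j, MvPolynomial.X j ^ 2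

/-- The last coordinate index of `Fin n`. -/
def lastI (n : ℕ) (hn : 0 < n) : Fin n := ⟨n - 1, Nat.sub_lt hn one_pos⟩

/-- The complex point `ξ − iτeₙ ∈ ℂⁿ`. -/
def evalPt {n : ℕ} (hn : 0 < n) (ξ : Fin n → ℝ) (τ : ℝ) : Fin n → ℂ :=
  fun j => (ξ j : ℂ) - if j = lastI n hn then Complex.I * (τ : ℂ) else 0

end

open MvPolynomial

lemma pderiv_P₂ (n : ℕ) (i : Fin n) : pderiv i (P₂ n) = 2 * X i := by
  have h : ∀ x : Fin n, pderiv i ((X x : MvPolynomial (Fin n) ℂ) ^ 2)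
      = if x = i then 2 * X i else 0 := by
    intro x
    by_cases hx : x = i <;>
      simp [hx, pow_two, pderiv_mul, pderiv_X, Pi.single_apply, two_mul]
  simp [P₂, h]

lemma pderiv_two_X (n : ℕ) (i : Fin n) :
    pderiv i (2 * X i : MvPolynomial (Fin n) ℂ) = 2 := by
  have h2 : (2 : MvPolynomial (Fin n) ℂ) = C 2 := (map_ofNat C 2).symm
  rw [pderiv_mul, pderiv_X, h2, pderiv_C]
  simp [Pi.single_apply]

lemma key_iterate (m n : ℕ) (hn : 0 < n) (k : ℕ) (hk : k ≤ m) :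
    ∃ Q : MvPolynomial (Fin n) ℂ,
      (⇑(pderiv (lastI n hn)))^[k] (P₂ n ^ m) =
        (m.descFactorial k : MvPolynomial (Fin n) ℂ) *
          (2 * X (lastI n hn)) ^ k * P₂ n ^ (m - k) + P₂ n ^ (m - k + 1) * Q := by
  induction k with
  | zero => exact ⟨0, by simp⟩
  | succ k ih =>
    obtain ⟨Q, hQ⟩ := ih (le_of_lt hk)
    set i := lastI n hn with hi
    obtain ⟨j, hj⟩ : ∃ j, m - k = j + 1 := ⟨m - (k + 1), by omega⟩
    have hj' : m - (k + 1) = j := by omega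
    refine ⟨(m.descFactorial k : MvPolynomial (Fin n) ℂ) * (2 * (k : MvPolynomial (Fin n) ℂ) * (2 * X i) ^ (k - 1))
        + ((j : MvPolynomial (Fin n) ℂ) + 2) * (2 * X i) * Q + P₂ n * pderiv i Q, ?_⟩
    rw [Function.iterate_succ_apply', hQ, hj, hj']
    have hd : m.descFactorial (k + 1) = (j + 1) * m.descFactorial k := by
      rw [Nat.descFactorial_succ, hj]
    have hD2 : pderiv i (2 : MvPolynomial (Fin n) ℂ) = 0 := by
      rw [show (2 : MvPolynomial (Fin n) ℂ) = C 2 from (map_ofNat C 2).symm, pderiv_C]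
    simp only [map_add, hD2, pderiv_X_self, Derivation.leibniz, Derivation.leibniz_pow, pderiv_P₂,
      pderiv_two_X, Derivation.map_natCast, smul_eq_mul, nsmul_eq_mul,
      Nat.add_sub_cancel, mul_zero, zero_mul, add_zero, zero_add, hd,
      Nat.cast_mul, Nat.cast_add, Nat.cast_one]
    ring


/-- The algebraic identity (part of (3.10)): `∂ₙ^m(P₂^m) − m!·(2ζₙ)^m` is
divisible by `P₂`. -/
theorem pderiv_pow_sub_factorial_dvd
    (m n : ℕ) (hm : 0 < m) (hn : 0 < n) :
    ∃ Pt : MvPolynomial (Fin n) ℂ,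
      (fun Q => MvPolynomial.pderiv (lastI n hn) Q)^[m] (P₂ n ^ m) =
        (m.factorial : MvPolynomial (Fin n) ℂ) *
          (2 * MvPolynomial.X (lastI n hn)) ^ m + P₂ n * Pt := by
  obtain ⟨Q, hQ⟩ := key_iterate m n hn m le_rfl
  refine ⟨Q, ?_⟩
  have h2 : (fun Q => MvPolynomial.pderiv (lastI n hn) Q)
      = (⇑(pderiv (lastI n hn)) : MvPolynomial (Fin n) ℂ → MvPolynomial (Fin n) ℂ) := rfl
  rw [h2, hQ]
  simp [Nat.descFactorial_self]
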